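/- Let (S, 𝒮) and (Y, 𝒴) be measurable spaces with every singleton of Y measurable, let Ψ : S → Y be measurable, let ν be a σ-finite measure on Y, and let y ↦ μ_y and y ↦ τ_y be two assignments of measures on S such that y ↦ μ_y(B) and y ↦ τ_y(B) are measurable for every B ∈ 𝒮. Assume: (i) μ is a measure on S satisfying μ(B) = ∫_Y μ_y(B) dν(y) for every B ∈ 𝒮; (ii) for every y ∈ Y, μ_y(Ψ⁻¹({y})ᶜ) = 0 and τ_y(Ψ⁻¹({y})ᶜ) = 0 (each μ_y and τ_y is concentrated on the fiber over y); (iii) V ∈ 𝒴 and for every y ∈ V the measures μ_y and τ_y are mutually absolutely continuous. Define τ(B) := ∫_V τ_y(B) dν(y). Then for every measurable B ⊆ Ψ⁻¹(V), one has μ(B) = 0 if and only if τ(B) = 0; that is, τ is equivalent to the restriction of μ to Ψ⁻¹(V). -/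

import Mathlib

/-! Since μ_y is concentrated on the fiber over y, μ_y(B) vanishes for y ∉ V when
B ⊆ Ψ⁻¹(V), so μ(B) = ∫_V μ_y(B) dν. Both μ(B) and τ(B) are then integrals over V of
measurable functions that vanish at the same points, by mutual absolute continuity. -/

open MeasureTheory

theorem measure_eq_zero_of_subset_preimage_of_notMem {S Y : Type*} [MeasurableSpace S]
    {m : Measure S} {Ψ : S → Y} {y : Y} (hm : m (Ψ ⁻¹' {y})ᶜ = 0) {B : Set S} {V : Set Y}
    (hBV : B ⊆ Ψ ⁻¹' V) (hy : y ∉ V) : m B = 0 :=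
  measure_mono_null (fun s hs (hsy : Ψ s = y) => hy (hsy ▸ hBV hs)) hm

theorem setLIntegral_eq_zero_iff_of_eq_zero_iff {α : Type*} [MeasurableSpace α] {μ : Measure α}
    {s : Set α} (hs : MeasurableSet s) {f g : α → ENNReal} (hf : Measurable f)
    (hg : Measurable g) (hfg : ∀ x ∈ s, f x = 0 ↔ g x = 0) :
    ∫⁻ x in s, f x ∂μ = 0 ↔ ∫⁻ x in s, g x ∂μ = 0 := by
  rw [setLIntegral_eq_zero_iff hs hf, setLIntegral_eq_zero_iff hs hg]
  exact Filter.eventually_congr (.of_forall fun x => forall_congr' (hfg x))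

theorem stmt_16_general
    {S Y : Type*} [MeasurableSpace S] [MeasurableSpace Y]
    (Ψ : S → Y)
    (ν : Measure Y)
    (μy τy : Y → Measure S)
    (hμmeas : ∀ B : Set S, MeasurableSet B → Measurable fun y => μy y B)
    (hτmeas : ∀ B : Set S, MeasurableSet B → Measurable fun y => τy y B)
    (μ : Measure S)
    (hdis : ∀ B : Set S, MeasurableSet B → μ B = ∫⁻ y, μy y B ∂ν)
    (hconc : ∀ y : Y, μy y ((Ψ ⁻¹' {y})ᶜ) = 0 ∧ τy y ((Ψ ⁻¹' {y})ᶜ) = 0)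
    (V : Set Y) (hV : MeasurableSet V)
    (hequiv : ∀ y ∈ V, μy y ≪ τy y ∧ τy y ≪ μy y) :
    ∀ B : Set S, MeasurableSet B → B ⊆ Ψ ⁻¹' V →
      (μ B = 0 ↔ ∫⁻ y in V, τy y B ∂ν = 0) := by
  intro B hB hBV
  have hμB : μ B = ∫⁻ y in V, μy y B ∂ν := by
    rw [hdis B hB, setLIntegral_eq_of_support_subset]
    intro y hy
    by_contra hyV
    exact hy (measure_eq_zero_of_subset_preimage_of_notMem (hconc y).1 hBV hyV)
  rw [hμB]
  exact setLIntegral_eq_zero_iff_of_eq_zero_iff hV (hμmeas B hB) (hτmeas B hB)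
    fun y hy => ⟨fun h => (hequiv y hy).2 h, fun h => (hequiv y hy).1 h⟩

/-- **Fiberwise equivalence of disintegrated measures.**
Let `Ψ : S → Y` be measurable (with all singletons of `Y` measurable), `ν` a σ-finite measure
on `Y`, and `y ↦ μ_y`, `y ↦ τ_y` measurable families of measures on `S` such that:
(i) `μ(B) = ∫_Y μ_y(B) dν(y)` for every measurable `B`; (ii) each `μ_y` and `τ_y` is
concentrated on the fiber `Ψ⁻¹({y})`; (iii) for every `y` in the measurable set `V`, `μ_y`
and `τ_y` are mutually absolutely continuous.  Defining `τ(B) := ∫_V τ_y(B) dν(y)`, one has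
for every measurable `B ⊆ Ψ⁻¹(V)`: `μ(B) = 0 ↔ τ(B) = 0`; i.e. `τ` is equivalent to the
restriction of `μ` to `Ψ⁻¹(V)`. -/
theorem stmt_16
    {S Y : Type*} [MeasurableSpace S] [MeasurableSpace Y]
    (hY : ∀ y : Y, MeasurableSet ({y} : Set Y))
    (Ψ : S → Y) (hΨ : Measurable Ψ)
    (ν : Measure Y) [SigmaFinite ν]
    (μy τy : Y → Measure S)
    (hμmeas : ∀ B : Set S, MeasurableSet B → Measurable fun y => μy y B)
    (hτmeas : ∀ B : Set S, MeasurableSet B → Measurable fun y => τy y B)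
    (μ : Measure S)
    (hdis : ∀ B : Set S, MeasurableSet B → μ B = ∫⁻ y, μy y B ∂ν)
    (hconc : ∀ y : Y, μy y ((Ψ ⁻¹' {y})ᶜ) = 0 ∧ τy y ((Ψ ⁻¹' {y})ᶜ) = 0)
    (V : Set Y) (hV : MeasurableSet V)
    (hequiv : ∀ y ∈ V, μy y ≪ τy y ∧ τy y ≪ μy y) :
    ∀ B : Set S, MeasurableSet B → B ⊆ Ψ ⁻¹' V →
      (μ B = 0 ↔ ∫⁻ y in V, τy y B ∂ν = 0) :=
  stmt_16_general Ψ ν μy τy hμmeas hτmeas μ hdis hconc V hV hequiv
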